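/- arXiv:1611.09582 — 3 statements merged into one kernel-verified Lean document; each statement's English description precedes it below -/
import Mathlib

section
/- For coprime positive integers ℓ₁, ℓ₂ with ℓ₁ℓ₂ cubefree and complex s with Re(s) > 0, the double Dirichlet series ∑_{ℓ₁n = ℓ₂m} τ(n)τ(m)/(nm)^{1/2+s} equals (f(ℓ₁ℓ₂; 1+2s)/(ℓ₁ℓ₂)^{1/2+s}) · ζ(1+2s)⁴/ζ(2+4s), where f(·; w) is the multiplicative function supported on cubefree integers with f(p; w) = 2/(1+p^{-w}) and f(p²; w) = (3−p^{-w})/(1+p^{-w}). -/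
/-!
Since `ℓ₁` and `ℓ₂` are coprime, the solutions of `ℓ₁ n = ℓ₂ m` are `n = ℓ₂ k`, `m = ℓ₁ k`, and
prime by prime one checks `τ(ℓ₂ k) τ(ℓ₁ k) = τ(L k) τ(k)` with `L = ℓ₁ ℓ₂`. So the series is
`L^{-1/2-s} ∑ₖ τ(L k) τ(k) k^{-w}` with `w = 1 + 2s`. The coefficient `τ(L k) τ(k) / τ(L)` is
multiplicative in `k`, and with `x = p^{-w}`, `v = v_p(L)` its Euler factor at `p` is
`∑ₑ (v+e+1)(e+1)/(v+1) xᵉ = ((v+1) - (v-1) x) / ((v+1)(1-x)³)`. For `v ≤ 2` (`L` is cubefree) this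
is `f(pᵛ; w)/τ(pᵛ)` times `(1-x²)/(1-x)⁴`, the Euler factor of `ζ(w)⁴/ζ(2w)`.
-/

open Complex

/-- The divisor function τ(n). -/
def tau (n : ℕ) : ℕ := n.divisors.card

@[simp]
lemma tau_zero : tau 0 = 0 := by simp [tau]

lemma tau_pos {n : ℕ} (hn : n ≠ 0) : 0 < tau n :=
  Finset.card_pos.mpr ⟨1, Nat.one_mem_divisors.mpr hn⟩

lemma tau_prime_pow {p : ℕ} (hp : p.Prime) (e : ℕ) : tau (p ^ e) = e + 1 := by
  rw [tau, ← ArithmeticFunction.sigma_zero_apply, ArithmeticFunction.sigma_zero_apply_prime_pow hp]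

lemma tau_mul_of_coprime {m n : ℕ} (hmn : m.Coprime n) : tau (m * n) = tau m * tau n :=
  hmn.card_divisors_mul

lemma tau_mul_le (m n : ℕ) : tau (m * n) ≤ tau m * tau n := by
  rw [tau, Nat.divisors_mul]
  exact Finset.card_mul_le

lemma tau_eq_prod_factorization {n : ℕ} (hn : n ≠ 0) {S : Finset ℕ} (hS : n.primeFactors ⊆ S) :
    tau n = ∏ p ∈ S, (n.factorization p + 1) := by
  rw [tau, Nat.card_divisors hn]
  refine Finset.prod_subset hS fun p _ hp => ?_
  rw [← Nat.support_factorization, Finsupp.notMem_support_iff] at hp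
  simp [hp]

lemma factorization_eq_zero_or_of_coprime {a b : ℕ} (hab : a.Coprime b) (p : ℕ) :
    a.factorization p = 0 ∨ b.factorization p = 0 := by
  by_contra! h
  simp only [← Finsupp.mem_support_iff, Nat.support_factorization] at h
  exact Finset.disjoint_left.mp hab.disjoint_primeFactors h.1 h.2

theorem tau_mul_mul_tau_of_coprime {a b : ℕ} (hab : a.Coprime b) (k : ℕ) :
    tau (a * k) * tau (b * k) = tau (a * b * k) * tau k := by
  rcases eq_or_ne a 0 with rfl | ha
  · simp [(Nat.coprime_zero_left b).mp hab]
  rcases eq_or_ne b 0 with rfl | hb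
  · simp [(Nat.coprime_zero_right a).mp hab]
  rcases eq_or_ne k 0 with rfl | hk
  · simp
  have habk : a * b * k ≠ 0 := by positivity
  have hsub : ∀ {d m}, d * m = a * b * k → m.primeFactors ⊆ (a * b * k).primeFactors :=
    fun hdm => Nat.primeFactors_mono ⟨_, hdm.symm.trans (mul_comm _ _)⟩ habk
  rw [tau_eq_prod_factorization (by positivity) (hsub (d := b) (by ring)),
    tau_eq_prod_factorization (by positivity) (hsub (d := a) (by ring)),
    tau_eq_prod_factorization habk subset_rfl,
    tau_eq_prod_factorization hk (hsub (d := a * b) rfl),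
    ← Finset.prod_mul_distrib, ← Finset.prod_mul_distrib]
  refine Finset.prod_congr rfl fun p _ => ?_
  simp only [Nat.factorization_mul ha hk, Nat.factorization_mul hb hk,
    Nat.factorization_mul (mul_ne_zero ha hb) hk, Nat.factorization_mul ha hb, Finsupp.add_apply]
  rcases factorization_eq_zero_or_of_coprime hab p with h | h <;> rw [h] <;> ring

lemma tau_mul_prime_pow {n p : ℕ} (hp : p.Prime) (hn : n ≠ 0) (e : ℕ) :
    tau (n * p ^ e) = (n.factorization p + e + 1) * tau (ordCompl[p] n) := by
  conv_lhs => rw [← Nat.ordProj_mul_ordCompl_eq_self n p]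
  rw [show ordProj[p] n * ordCompl[p] n * p ^ e = p ^ (n.factorization p + e) * ordCompl[p] n by
    ring, tau_mul_of_coprime ((Nat.coprime_ordCompl hp hn).pow_left _), tau_prime_pow hp]

lemma card_divisorsAntidiagonal_eq_tau (n : ℕ) : n.divisorsAntidiagonal.card = tau n := by
  rw [tau, ← Nat.map_div_right_divisors, Finset.card_map]

lemma sq_tau_le_sum_divisorsAntidiagonal (n : ℕ) :
    tau n ^ 2 ≤ ∑ x ∈ n.divisorsAntidiagonal, tau x.1 * tau x.2 := by
  calc tau n ^ 2 = ∑ _x ∈ n.divisorsAntidiagonal, tau n := by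
        simp [card_divisorsAntidiagonal_eq_tau, sq]
    _ ≤ _ := Finset.sum_le_sum fun x hx => by
        rw [← (Nat.mem_divisorsAntidiagonal.mp hx).1]
        exact tau_mul_le _ _

open LSeries

lemma LSeriesSummable.of_norm_le {f g : ℕ → ℂ} {s : ℂ} (hg : LSeriesSummable g s)
    (h : ∀ n, ‖f n‖ ≤ ‖g n‖) : LSeriesSummable f s :=
  .of_norm_bounded (summable_norm_iff.mpr hg) fun n => norm_term_le s (h n)

lemma LSeriesSummable_tau {s : ℂ} (hs : 1 < s.re) :
    LSeriesSummable (fun n => (tau n : ℂ)) s := by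
  have h1 := LSeriesSummable_one_iff.mpr hs
  refine (LSeriesSummable_congr s fun {n} _ => ?_).mp (h1.convolution h1)
  simp [convolution_def, card_divisorsAntidiagonal_eq_tau]

lemma LSeriesSummable_sq_tau {s : ℂ} (hs : 1 < s.re) :
    LSeriesSummable (fun n => (tau n : ℂ) ^ 2) s := by
  have h := LSeriesSummable_tau hs
  refine (h.convolution h).of_norm_le fun n => ?_
  simp only [convolution_def, ← Nat.cast_mul, ← Nat.cast_sum, ← Nat.cast_pow, norm_natCast]
  exact_mod_cast sq_tau_le_sum_divisorsAntidiagonal n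

lemma term_prime_pow (g : ℕ → ℂ) (s : ℂ) {p : ℕ} (hp : p ≠ 0) (e : ℕ) :
    term g s (p ^ e) = g (p ^ e) * ((p : ℂ) ^ (-s)) ^ e := by
  rw [term_of_ne_zero (pow_ne_zero e hp), Nat.cast_pow, ← natCast_cpow_natCast_mul, cpow_nat_mul,
    cpow_neg, inv_pow, div_eq_mul_inv]

theorem LSeries_eulerProduct_hasProd {g : ℕ → ℂ} (h1 : g 1 = 1)
    (hmul : ∀ {m n}, m.Coprime n → g (m * n) = g m * g n) {s : ℂ} (hs : LSeriesSummable g s) :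
    HasProd (fun p : Nat.Primes => ∑' e : ℕ, g (p ^ e) * ((p : ℂ) ^ (-s)) ^ e) (LSeries g s) := by
  have hterm1 : term g s 1 = 1 := by simp [h1]
  have hmul' : ∀ {m n}, m.Coprime n → term g s (m * n) = term g s m * term g s n := by
    intro m n hmn
    rcases eq_or_ne m 0 with rfl | hm
    · simp [(Nat.coprime_zero_left n).mp hmn]
    rcases eq_or_ne n 0 with rfl | hn
    · simp [(Nat.coprime_zero_right m).mp hmn]
    rw [term_of_ne_zero (mul_ne_zero hm hn), term_of_ne_zero hm, term_of_ne_zero hn, hmul hmn,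
      Nat.cast_mul, natCast_mul_natCast_cpow, mul_div_mul_comm]
  rw [LSeries]
  convert EulerProduct.eulerProduct_hasProd hterm1 hmul' (summable_norm_iff.mpr hs)
    (term_zero g s) using 2 with p
  exact tsum_congr fun e => (term_prime_pow g s p.2.ne_zero e).symm

theorem hasProd_primes_pow_factorization {M : Type*} [CommMonoid M] [TopologicalSpace M]
    {g : ℕ → M} (h1 : g 1 = 1) (hmul : ∀ m n, m.Coprime n → g (m * n) = g m * g n)
    {n : ℕ} (hn : n ≠ 0) :
    HasProd (fun p : Nat.Primes => g (p ^ n.factorization p)) (g n) := by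
  have hone : ∀ p ∉ n.primeFactors, g (p ^ n.factorization p) = 1 := fun p hp => by
    rw [← Nat.support_factorization, Finsupp.notMem_support_iff] at hp
    rw [hp, pow_zero, h1]
  rw [Nat.multiplicative_factorization g hmul h1 hn, Finsupp.prod, Nat.support_factorization]
  refine (Subtype.val_injective.hasProd_iff fun p hp => hone p fun h => hp ?_).mpr
    (hasProd_prod_of_ne_finset_one hone)
  exact ⟨⟨p, Nat.prime_of_mem_primeFactors h⟩, rfl⟩

lemma tsum_quadratic_mul_geometric_of_norm_lt_one {x : ℂ} (hx : ‖x‖ < 1) (v : ℕ) :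
    ∑' e : ℕ, ((v + e + 1) * (e + 1) : ℂ) * x ^ e = (v + 1 - (v - 1) * x) / (1 - x) ^ 3 := by
  have hx1 : 1 - x ≠ 0 := sub_ne_zero.mpr fun h => by simp [← h] at hx
  -- `(v+e+1)(e+1) = 2 (e+2 choose 2) + (v-1) (e+1 choose 1)`
  have hsum := ((hasSum_choose_mul_geometric_of_norm_lt_one 2 hx).mul_left 2).add
    ((hasSum_choose_mul_geometric_of_norm_lt_one 1 hx).mul_left ((v : ℂ) - 1))
  convert hsum.tsum_eq using 1
  · congr 1
    funext e
    rw [Nat.cast_choose_two, Nat.choose_one_right]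
    push_cast
    ring
  · field_simp
    ring

lemma apply_prime_pow_of_le_two {g : ℕ → ℂ} {p : ℕ} {x : ℂ} (hx : 1 + x ≠ 0) (h1 : g 1 = 1)
    (hp1 : g p = 2 / (1 + x)) (hp2 : g (p ^ 2) = (3 - x) / (1 + x)) {v : ℕ} (hv : v ≤ 2) :
    g (p ^ v) = (v + 1 - (v - 1) * x) / (1 + x) := by
  interval_cases v
  · rw [pow_zero, h1]
    field_simp
    ring
  · rw [pow_one, hp1]
    norm_num
  · rw [hp2]
    norm_num

noncomputable def normalizedTauMulTau (L k : ℕ) : ℂ := (tau (L * k) * tau k : ℂ) / tau L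

lemma normalizedTauMulTau_one {L : ℕ} (hL : L ≠ 0) : normalizedTauMulTau L 1 = 1 := by
  simp [normalizedTauMulTau, tau, hL]

lemma normalizedTauMulTau_mul_of_coprime (L : ℕ) {m n : ℕ} (hmn : m.Coprime n) :
    normalizedTauMulTau L (m * n) = normalizedTauMulTau L m * normalizedTauMulTau L n := by
  have key : (tau (L * m) * tau (L * n) : ℂ) = tau (L * (m * n)) * tau L := by
    rw [mul_comm L, mul_comm L, mul_comm L]
    exact_mod_cast tau_mul_mul_tau_of_coprime hmn L
  rcases eq_or_ne (tau L) 0 with hτ | hτ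
  · simp [normalizedTauMulTau, hτ]
  simp only [normalizedTauMulTau, tau_mul_of_coprime hmn, Nat.cast_mul]
  field_simp
  linear_combination -(tau m * tau n : ℂ) * key

lemma LSeriesSummable_normalizedTauMulTau (L : ℕ) {w : ℂ} (hw : 1 < w.re) :
    LSeriesSummable (normalizedTauMulTau L) w := by
  refine (LSeriesSummable_sq_tau hw).of_norm_le fun k => ?_
  rcases eq_or_ne L 0 with rfl | hL
  · simp [normalizedTauMulTau]
  have hle : tau (L * k) * tau k ≤ tau k ^ 2 * tau L := by
    nlinarith [tau_mul_le L k]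
  simp only [normalizedTauMulTau, norm_div, norm_mul, norm_pow, Complex.norm_natCast]
  rw [div_le_iff₀ (Nat.cast_pos.mpr (tau_pos hL))]
  exact_mod_cast hle

lemma tsum_normalizedTauMulTau_prime_pow_mul_geometric {L p : ℕ} (hp : p.Prime) (hL : L ≠ 0)
    {x : ℂ} (hx : ‖x‖ < 1) :
    ∑' e : ℕ, normalizedTauMulTau L (p ^ e) * x ^ e
      = (L.factorization p + 1 - (L.factorization p - 1) * x)
          / ((L.factorization p + 1) * (1 - x) ^ 3) := by
  have hx1 : 1 - x ≠ 0 := sub_ne_zero.mpr fun h => by simp [← h] at hx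
  have hτL := tau_mul_prime_pow hp hL 0
  rw [pow_zero, mul_one, add_zero] at hτL
  have hcompl : (tau (ordCompl[p] L) : ℂ) ≠ 0 :=
    Nat.cast_ne_zero.mpr (tau_pos (Nat.ordCompl_pos p hL).ne').ne'
  have hterm : ∀ e : ℕ, normalizedTauMulTau L (p ^ e)
      = (L.factorization p + e + 1) * (e + 1) / (L.factorization p + 1) := fun e => by
    rw [normalizedTauMulTau, tau_mul_prime_pow hp hL e, hτL, tau_prime_pow hp]
    push_cast
    field_simp
  simp_rw [hterm, div_mul_eq_mul_div, tsum_div_const,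
    tsum_quadratic_mul_geometric_of_norm_lt_one hx]
  field_simp

theorem LSeries_normalizedTauMulTau {L : ℕ} (hL : ∀ p : ℕ, p.Prime → ¬ p ^ 3 ∣ L) {w : ℂ}
    (hw : 1 < w.re) {g : ℕ → ℂ} (hg1 : g 1 = 1)
    (hgmul : ∀ m n : ℕ, m.Coprime n → g (m * n) = g m * g n)
    (hgp : ∀ p : ℕ, p.Prime → g p = 2 / (1 + (p : ℂ) ^ (-w)))
    (hgp2 : ∀ p : ℕ, p.Prime → g (p ^ 2) = (3 - (p : ℂ) ^ (-w)) / (1 + (p : ℂ) ^ (-w))) :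
    LSeries (normalizedTauMulTau L) w
      = g L / tau L * riemannZeta w ^ 4 * (riemannZeta (2 * w))⁻¹ := by
  have hL0 : L ≠ 0 := by
    rintro rfl
    exact hL 2 Nat.prime_two (dvd_zero _)
  have hw2 : 1 < (2 * w).re := by
    simp
    linarith
  have hRHS := ((hasProd_primes_pow_factorization (g := fun n => g n / tau n) (by simp [hg1, tau])
    (fun m n hmn => by simp only [hgmul m n hmn, tau_mul_of_coprime hmn, Nat.cast_mul,
      mul_div_mul_comm]) hL0).mul ((riemannZeta_eulerProduct_hasProd hw).pow 4)).mul
    ((riemannZeta_eulerProduct_hasProd hw2).inv₀ (riemannZeta_ne_zero_of_one_lt_re hw2))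
  have hlocal : ∀ p : Nat.Primes, ∑' e : ℕ, normalizedTauMulTau L (p ^ e) * ((p : ℂ) ^ (-w)) ^ e
      = g (p ^ L.factorization p) / tau (p ^ L.factorization p) * ((1 - (p : ℂ) ^ (-w))⁻¹) ^ 4
        * ((1 - (p : ℂ) ^ (-(2 * w)))⁻¹)⁻¹ := fun p => by
    have hp := p.2
    set x := (p : ℂ) ^ (-w)
    have hx : ‖x‖ < 1 := (norm_prime_cpow_le_one_half p hw).trans_lt (by norm_num)
    have hx1 : 1 - x ≠ 0 := sub_ne_zero.mpr fun h => by simp [← h] at hx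
    have hx2 : 1 + x ≠ 0 := fun h => by simp [eq_neg_of_add_eq_zero_right h] at hx
    have hv : L.factorization p ≤ 2 := by
      by_contra! h
      exact hL p hp ((hp.pow_dvd_iff_le_factorization hL0).mpr h)
    rw [tsum_normalizedTauMulTau_prime_pow_mul_geometric hp hL0 hx, tau_prime_pow hp,
      apply_prime_pow_of_le_two hx2 hg1 (hgp p hp) (hgp2 p hp) hv,
      show (p : ℂ) ^ (-(2 * w)) = x ^ 2 by rw [← cpow_nat_mul]; ring_nf]
    push_cast
    field_simp
    ring
  exact (LSeries_eulerProduct_hasProd (normalizedTauMulTau_one hL0)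
    (normalizedTauMulTau_mul_of_coprime L) (LSeriesSummable_normalizedTauMulTau L hw)).unique
      ((funext hlocal).symm ▸ hRHS)

theorem tsum_tsum_ite_mul_eq_mul {α : Type*} [AddCommMonoid α] [TopologicalSpace α] {a b : ℕ}
    (hab : a.Coprime b) (hb : b ≠ 0) (F : ℕ → ℕ → α) :
    ∑' n, ∑' m, (if a * n = b * m then F n m else 0) = ∑' k, F (b * k) (a * k) := by
  have hinner : ∀ n, ∑' m, (if a * n = b * m then F n m else 0)
      = if b ∣ n then F n (a * (n / b)) else 0 := fun n => by
    split_ifs with hdvd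
    · obtain ⟨k, rfl⟩ := hdvd
      rw [Nat.mul_div_cancel_left k (Nat.pos_of_ne_zero hb),
        tsum_eq_single (a * k) fun m hm => if_neg fun h => hm (mul_left_cancel₀ hb ?_)]
      · exact if_pos (by ring)
      · rw [← h]
        ring
    · exact (tsum_congr fun m => if_neg fun h =>
        hdvd (hab.symm.dvd_of_dvd_mul_left ⟨m, h⟩)).trans tsum_zero
  rw [tsum_congr hinner, ← (mul_right_injective₀ hb).tsum_eq]
  · simp [Nat.mul_div_cancel_left _ (Nat.pos_of_ne_zero hb)]
  · intro n hn
    by_contra hrange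
    exact hn (if_neg fun ⟨k, hk⟩ => hrange ⟨k, hk.symm⟩)

lemma tau_mul_tau_div_cpow_eq_mul_term {a b : ℕ} (hab : a.Coprime b) (z : ℂ) (k : ℕ) :
    (tau (b * k) * tau (a * k) : ℂ) / ((b * k * (a * k) : ℕ) : ℂ) ^ z
      = tau (a * b) / ((a * b : ℕ) : ℂ) ^ z * term (normalizedTauMulTau (a * b)) (2 * z) k := by
  rcases eq_or_ne (a * b) 0 with hab0 | hab0
  · rcases mul_eq_zero.mp hab0 with rfl | rfl <;> simp
  rcases eq_or_ne k 0 with rfl | hk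
  · simp
  have hτ : (tau (a * b) : ℂ) ≠ 0 := Nat.cast_ne_zero.mpr (tau_pos hab0).ne'
  have hden : ((b * k * (a * k) : ℕ) : ℂ) ^ z = ((a * b : ℕ) : ℂ) ^ z * (k : ℂ) ^ (2 * z) := by
    rw [show b * k * (a * k) = a * b * (k * k) by ring, Nat.cast_mul, natCast_mul_natCast_cpow,
      Nat.cast_mul k k, natCast_mul_natCast_cpow, ← cpow_add _ _ (Nat.cast_ne_zero.mpr hk), two_mul]
  have hnum := tau_mul_mul_tau_of_coprime hab.symm k
  rw [mul_comm b a] at hnum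
  rw [term_of_ne_zero hk, hden, ← Nat.cast_mul, hnum, Nat.cast_mul, normalizedTauMulTau]
  field_simp

theorem diagonal_series_factorization_general
    (ℓ₁ ℓ₂ : ℕ)
    (hcop : Nat.Coprime ℓ₁ ℓ₂)
    (hcube : ∀ p : ℕ, p.Prime → ¬ p ^ 3 ∣ ℓ₁ * ℓ₂)
    (s : ℂ) (hs : 0 < s.re)
    (f : ℕ → ℂ → ℂ)
    (hf1 : ∀ w : ℂ, f 1 w = 1)
    (hfmul : ∀ m n : ℕ, Nat.Coprime m n → ∀ w : ℂ, f (m * n) w = f m w * f n w)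
    (hfp : ∀ p : ℕ, p.Prime → ∀ w : ℂ, f p w = 2 / (1 + (p : ℂ) ^ (-w)))
    (hfp2 : ∀ p : ℕ, p.Prime → ∀ w : ℂ,
      f (p ^ 2) w = (3 - (p : ℂ) ^ (-w)) / (1 + (p : ℂ) ^ (-w))) :
    (∑' n : ℕ, ∑' m : ℕ,
        (if ℓ₁ * n = ℓ₂ * m then
          ((tau n : ℂ) * (tau m : ℂ)) / (((n * m : ℕ) : ℂ) ^ ((1 : ℂ) / 2 + s)) else 0))
      = f (ℓ₁ * ℓ₂) (1 + 2 * s) / (((ℓ₁ * ℓ₂ : ℕ) : ℂ) ^ ((1 : ℂ) / 2 + s))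
        * (riemannZeta (1 + 2 * s)) ^ 4 / riemannZeta (2 + 4 * s) := by
  have hL : ℓ₁ * ℓ₂ ≠ 0 := fun h => hcube 2 Nat.prime_two (h ▸ dvd_zero _)
  have hw : 1 < (2 * (1 / 2 + s)).re := by
    simp
    linarith
  have hτ : (tau (ℓ₁ * ℓ₂) : ℂ) ≠ 0 := Nat.cast_ne_zero.mpr (tau_pos hL).ne'
  rw [tsum_tsum_ite_mul_eq_mul hcop (right_ne_zero_of_mul hL),
    tsum_congr (tau_mul_tau_div_cpow_eq_mul_term hcop _), tsum_mul_left, ← LSeries,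
    LSeries_normalizedTauMulTau hcube hw (hf1 _) (fun m n h => hfmul m n h _)
      (fun p hp => hfp p hp _) (fun p hp => hfp2 p hp _),
    show 2 * (1 / 2 + s) = 1 + 2 * s by ring, show 2 + 4 * s = 2 * (1 + 2 * s) by ring]
  field_simp

/-- For coprime `ℓ₁, ℓ₂` with `ℓ₁ℓ₂` cubefree and `Re s > 0`, the double Dirichlet
series `∑_{ℓ₁n = ℓ₂m} τ(n)τ(m)/(nm)^{1/2+s}` factorizes as
`f(ℓ₁ℓ₂;1+2s)/(ℓ₁ℓ₂)^{1/2+s} · ζ(1+2s)⁴/ζ(2+4s)`, where `f(·;w)` is the multiplicative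
function supported on cubefree integers with the indicated values on `p` and `p²`. -/
theorem diagonal_series_factorization
    (ℓ₁ ℓ₂ : ℕ) (hℓ₁ : 0 < ℓ₁) (hℓ₂ : 0 < ℓ₂)
    (hcop : Nat.Coprime ℓ₁ ℓ₂)
    (hcube : ∀ p : ℕ, p.Prime → ¬ p ^ 3 ∣ ℓ₁ * ℓ₂)
    (s : ℂ) (hs : 0 < s.re)
    (f : ℕ → ℂ → ℂ)
    (hf1 : ∀ w : ℂ, f 1 w = 1)
    (hfmul : ∀ m n : ℕ, Nat.Coprime m n → ∀ w : ℂ, f (m * n) w = f m w * f n w)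
    (hfp : ∀ p : ℕ, p.Prime → ∀ w : ℂ, f p w = 2 / (1 + (p : ℂ) ^ (-w)))
    (hfp2 : ∀ p : ℕ, p.Prime → ∀ w : ℂ,
      f (p ^ 2) w = (3 - (p : ℂ) ^ (-w)) / (1 + (p : ℂ) ^ (-w)))
    (hfpj : ∀ p : ℕ, p.Prime → ∀ j : ℕ, 3 ≤ j → ∀ w : ℂ, f (p ^ j) w = 0) :
    (∑' n : ℕ, ∑' m : ℕ,
        (if ℓ₁ * n = ℓ₂ * m then
          ((tau n : ℂ) * (tau m : ℂ)) / (((n * m : ℕ) : ℂ) ^ ((1 : ℂ) / 2 + s)) else 0))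
      = f (ℓ₁ * ℓ₂) (1 + 2 * s) / (((ℓ₁ * ℓ₂ : ℕ) : ℂ) ^ ((1 : ℂ) / 2 + s))
        * (riemannZeta (1 + 2 * s)) ^ 4 / riemannZeta (2 + 4 * s) :=
  diagonal_series_factorization_general ℓ₁ ℓ₂ hcop hcube s hs f hf1 hfmul hfp hfp2
end

section
/- For every complex s with Re(s) > 1, ∑_{n≥1} τ(n)²/n^s = ζ(s)⁴/ζ(2s). -/
/-!
On prime powers, `τ(p^k)² = (k+1)² = τ₃(p^k) + τ₃(p^(k-1))`, where `τ₃ = 1 ∗ τ` is the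
three-fold divisor function, and exactly one of `k`, `k - 1` is even. As all functions involved
are multiplicative, this gives `τ² = μ² ∗ τ₃` and `μ² ∗ 1_□ = 1`, where `μ²` and `1_□` are the
indicators of the squarefree numbers and of the squares. Taking L-series,
`∑ τ(n)² n^(-s) = L(μ², s) ζ(s)³` and `ζ(s) = L(μ², s) ζ(2s)`.
-/

open Complex

namespace Nat

theorem Coprime.isSquare_mul_iff {m n : ℕ} (h : m.Coprime n) :
    IsSquare (m * n) ↔ IsSquare m ∧ IsSquare n := by
  refine ⟨fun ⟨c, hc⟩ => ?_, fun ⟨hm, hn⟩ => hm.mul hn⟩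
  have hc2 : m * n = c ^ 2 := by rw [hc, sq]
  obtain ⟨a, rfl⟩ := exists_eq_pow_of_mul_eq_pow (Nat.isUnit_iff.mpr h) hc2
  obtain ⟨b, rfl⟩ :=
    exists_eq_pow_of_mul_eq_pow (Nat.isUnit_iff.mpr h.symm) ((mul_comm _ _).trans hc2)
  exact ⟨⟨a, sq a⟩, ⟨b, sq b⟩⟩

theorem Prime.isSquare_pow_iff {p k : ℕ} (hp : p.Prime) : IsSquare (p ^ k) ↔ Even k := by
  refine ⟨fun ⟨c, hc⟩ => ?_, fun ⟨j, hj⟩ => ⟨p ^ j, by rw [hj, pow_add]⟩⟩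
  obtain ⟨j, -, rfl⟩ := (Nat.dvd_prime_pow hp).mp (Dvd.intro c hc.symm)
  rw [← pow_add] at hc
  exact ⟨j, Nat.pow_right_injective hp.two_le hc⟩

theorem Prime.squarefree_pow_iff {p k : ℕ} (hp : p.Prime) : Squarefree (p ^ k) ↔ k ≤ 1 := by
  rcases Nat.lt_or_ge k 2 with hk | hk
  · interval_cases k <;> simp [hp.squarefree]
  · rw [Nat.squarefree_pow_iff hp.ne_one (by omega)]
    omega

end Nat

namespace ArithmeticFunction

open Finset
open scoped ArithmeticFunction.zeta ArithmeticFunction.sigma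

def indicator (P : ℕ → Prop) [DecidablePred P] : ArithmeticFunction ℕ :=
  ⟨fun n => if P n ∧ n ≠ 0 then 1 else 0, by simp⟩

section Indicator

variable {P : ℕ → Prop} [DecidablePred P]

theorem indicator_apply (n : ℕ) : indicator P n = if P n ∧ n ≠ 0 then 1 else 0 := rfl

theorem indicator_apply_prime_pow {p : ℕ} (hp : p.Prime) (k : ℕ) :
    indicator P (p ^ k) = if P (p ^ k) then 1 else 0 := by
  simp [indicator_apply, hp.ne_zero]

theorem isMultiplicative_indicator (h1 : P 1)
    (hP : ∀ {m n : ℕ}, m.Coprime n → (P (m * n) ↔ P m ∧ P n)) :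
    (indicator P).IsMultiplicative := by
  refine ⟨by simp [indicator_apply, h1], fun {m n} hmn => ?_⟩
  simp only [indicator_apply, hP hmn, mul_ne_zero_iff]
  split_ifs <;> tauto

end Indicator

theorem isMultiplicative_indicator_squarefree : (indicator Squarefree).IsMultiplicative :=
  isMultiplicative_indicator squarefree_one Nat.squarefree_mul

theorem isMultiplicative_indicator_isSquare : (indicator IsSquare).IsMultiplicative :=
  isMultiplicative_indicator IsSquare.one Nat.Coprime.isSquare_mul_iff

theorem indicator_squarefree_mul_apply_prime_pow_succ (f : ArithmeticFunction ℕ) {p : ℕ}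
    (hp : p.Prime) (k : ℕ) :
    (indicator Squarefree * f) (p ^ (k + 1)) = f (p ^ (k + 1)) + f (p ^ k) := by
  have hvanish (i : ℕ) : indicator Squarefree (p ^ (i + 1 + 1)) = 0 := by
    simp [indicator_apply_prime_pow hp, hp.squarefree_pow_iff]
  rw [mul_apply, Nat.sum_divisorsAntidiagonal (fun a b => indicator Squarefree a * f b),
    Nat.sum_divisors_prime_pow hp, sum_range_succ', sum_range_succ']
  simp only [hvanish, zero_mul, sum_const_zero, zero_add]
  simp [indicator_apply, hp.squarefree, hp.ne_zero, pow_succ, add_comm]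

theorem indicator_squarefree_mul_indicator_isSquare :
    indicator Squarefree * indicator IsSquare = (ζ : ArithmeticFunction ℕ) := by
  have hmul := isMultiplicative_indicator_squarefree.mul isMultiplicative_indicator_isSquare
  refine hmul.eq_iff_eq_on_prime_powers _ _ isMultiplicative_zeta |>.mpr fun p k hp => ?_
  rw [zeta_apply, if_neg (pow_ne_zero k hp.ne_zero)]
  rcases k with _ | k
  · simp [hmul.map_one]
  rw [indicator_squarefree_mul_apply_prime_pow_succ _ hp, indicator_apply_prime_pow hp,
    indicator_apply_prime_pow hp]
  simp only [hp.isSquare_pow_iff, Nat.even_add_one]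
  by_cases hk : Even k <;> simp [hk]

theorem zeta_mul_sigma_zero_apply_prime_pow {p : ℕ} (hp : p.Prime) (k : ℕ) :
    (ζ * σ 0) (p ^ k) = ∑ i ∈ range (k + 1), (i + 1) := by
  rw [zeta_mul_apply, Nat.sum_divisors_prime_pow hp]
  simp [sigma_zero_apply_prime_pow hp]

theorem sigma_zero_pmul_self :
    (σ 0).pmul (σ 0) = indicator Squarefree * (ζ * σ 0) := by
  have hmul := isMultiplicative_indicator_squarefree.mul
    (isMultiplicative_zeta.mul (isMultiplicative_sigma (k := 0)))
  refine (isMultiplicative_sigma.pmul isMultiplicative_sigma).eq_iff_eq_on_prime_powers _ _ hmul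
    |>.mpr fun p k hp => ?_
  rw [pmul_apply, sigma_zero_apply_prime_pow hp]
  rcases k with _ | k
  · simp [hmul.map_one]
  rw [indicator_squarefree_mul_apply_prime_pow_succ _ hp, zeta_mul_sigma_zero_apply_prime_pow hp,
    zeta_mul_sigma_zero_apply_prime_pow hp]
  induction k with
  | zero => rfl
  | succ k ih =>
    rw [sum_range_succ _ (k + 1 + 1)]
    rw [sum_range_succ _ (k + 1)] at ih ⊢
    linarith

open scoped LSeries.notation

theorem LSeriesHasSum_natCoe_mul {f g : ArithmeticFunction ℕ} {s a b : ℂ}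
    (hf : LSeriesHasSum ↗f s a) (hg : LSeriesHasSum ↗g s b) :
    LSeriesHasSum ↗(f * g) s (a * b) := by
  simpa [natCoe_mul] using
    LSeriesHasSum_mul (f := (f : ArithmeticFunction ℂ)) (g := g) (by simpa using hf)
      (by simpa using hg)

theorem LSeriesSummable_indicator (P : ℕ → Prop) [DecidablePred P] {s : ℂ} (hs : 1 < s.re) :
    LSeriesSummable ↗(indicator P) s :=
  LSeriesSummable_of_bounded_of_one_lt_re (m := 1)
    (fun n _ => by rw [indicator_apply]; split_ifs <;> simp) hs

theorem LSeriesHasSum_indicator_isSquare {s : ℂ} (hs : 1 / 2 < s.re) :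
    LSeriesHasSum ↗(indicator IsSquare) s (riemannZeta (2 * s)) := by
  have h2s : 1 < (2 * s).re := by
    rw [mul_re, re_ofNat, im_ofNat, zero_mul, sub_zero]; linarith
  have hoff : ∀ n ∉ Set.range (fun m : ℕ => m ^ 2),
      LSeries.term ↗(indicator IsSquare) s n = 0 := by
    intro n hn
    rcases eq_or_ne n 0 with rfl | hn0
    · exact LSeries.term_zero _ _
    have hn' : ¬IsSquare n := fun ⟨c, hc⟩ => hn ⟨c, by rw [hc]; exact sq c⟩
    simp [LSeries.term_of_ne_zero hn0, indicator_apply, hn']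
  have hsquares : LSeries.term ↗(indicator IsSquare) s ∘ (fun m : ℕ => m ^ 2)
      = LSeries.term ↗ζ (2 * s) := by
    funext m
    rcases eq_or_ne m 0 with rfl | hm
    · simp
    simp [indicator_apply, hm, IsSquare.mul_self, sq, natCast_mul_natCast_cpow, cpow_ofNat_mul]
  exact ((Nat.pow_left_injective two_ne_zero).hasSum_iff hoff).mp
    (hsquares ▸ LSeriesHasSum_zeta h2s)

theorem riemannZeta_eq_LSeries_indicator_squarefree_mul {s : ℂ} (hs : 1 < s.re) :
    riemannZeta s = LSeries ↗(indicator Squarefree) s * riemannZeta (2 * s) := by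
  have h := LSeriesHasSum_natCoe_mul (LSeriesSummable_indicator Squarefree hs).LSeriesHasSum
    (LSeriesHasSum_indicator_isSquare (by linarith))
  rw [indicator_squarefree_mul_indicator_isSquare] at h
  exact (LSeriesHasSum_zeta hs).unique h

theorem LSeriesHasSum_sigma_zero {s : ℂ} (hs : 1 < s.re) :
    LSeriesHasSum ↗(σ 0) s (riemannZeta s ^ 2) := by
  rw [← zeta_mul_pow_eq_sigma, pow_zero_eq_zeta, sq]
  exact LSeriesHasSum_natCoe_mul (LSeriesHasSum_zeta hs) (LSeriesHasSum_zeta hs)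

theorem LSeriesHasSum_sigma_zero_pmul_self {s : ℂ} (hs : 1 < s.re) :
    LSeriesHasSum ↗((σ 0).pmul (σ 0)) s
      (LSeries ↗(indicator Squarefree) s * riemannZeta s ^ 3) := by
  rw [sigma_zero_pmul_self, pow_succ']
  exact LSeriesHasSum_natCoe_mul (LSeriesSummable_indicator Squarefree hs).LSeriesHasSum
    (LSeriesHasSum_natCoe_mul (LSeriesHasSum_zeta hs) (LSeriesHasSum_sigma_zero hs))

end ArithmeticFunction

open ArithmeticFunction ArithmeticFunction.sigma LSeries.notation in
/-- For `Re s > 1`, `∑_{n≥1} τ(n)²/n^s = ζ(s)⁴/ζ(2s)`. -/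
theorem tau_sq_dirichlet_series (s : ℂ) (hs : 1 < s.re) :
    ∑' n : ℕ, ((tau n : ℂ) ^ 2 / (n : ℂ) ^ s)
      = (riemannZeta s) ^ 4 / riemannZeta (2 * s) := by
  have h2s : 1 < (2 * s).re := by
    rw [mul_re, re_ofNat, im_ofNat, zero_mul, sub_zero]; linarith
  have hseries : ∑' n : ℕ, ((tau n : ℂ) ^ 2 / (n : ℂ) ^ s)
      = LSeries ↗((σ 0).pmul (σ 0)) s := by
    refine tsum_congr fun n => ?_
    rcases eq_or_ne n 0 with rfl | hn
    · simp [tau]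
    · simp [LSeries.term_of_ne_zero hn, tau, sigma_zero_apply, sq]
  rw [hseries, (LSeriesHasSum_sigma_zero_pmul_self hs).LSeries_eq,
    eq_div_iff (riemannZeta_ne_zero_of_one_lt_re h2s)]
  linear_combination (-riemannZeta s ^ 3) * riemannZeta_eq_LSeries_indicator_squarefree_mul hs
end

section
/- Define H(s,u₁,u₂) = [Γ(2s−u₁−u₂)Γ(1/2−s+u₂)/Γ(1/2+s−u₁)] + [Γ(2s−u₁−u₂)Γ(1/2−s+u₁)/Γ(1/2+s−u₂)] + [Γ(1/2−s+u₁)Γ(1/2−s+u₂)/Γ(1−2s+u₁+u₂)]. Then H(s,u₁,u₂) = π^{1/2} · [Γ((2s−u₁−u₂)/2)/Γ((1+u₁+u₂−2s)/2)] · [Γ((1/2+u₁−s)/2)Γ((1/2+u₂−s)/2)]/[Γ((1/2−u₁+s)/2)Γ((1/2−u₂+s)/2)]. -/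
open Complex

lemma trig_aux (x y : ℂ) :
    (Complex.sin (2*x) + Complex.sin (2*y) + Complex.sin (2*x+2*y)) * Complex.cos (x+y)
      = 2 * Complex.cos x * Complex.cos y * Complex.sin (2*x+2*y) := by
  rw [show (2*x+2*y) = 2*(x+y) by ring, Complex.sin_two_mul, Complex.sin_two_mul,
    Complex.sin_two_mul, Complex.sin_add, Complex.cos_add]
  linear_combination (2*(Complex.cos x*Complex.cos y - Complex.sin x*Complex.sin y)
        * Complex.sin x * Complex.cos x
      - 4*Complex.sin x*Complex.cos y + 4*(Complex.sin x)^2*Complex.cos x*Complex.sin y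
      + 4*(Complex.sin x)^3*Complex.cos y) * Complex.sin_sq_add_cos_sq y
    + (2*(Complex.cos x*Complex.cos y - Complex.sin x*Complex.sin y)
        * Complex.sin y * Complex.cos y
      - 4*Complex.cos x*Complex.sin y*(Complex.cos y)^2 + 4*Complex.sin x*Complex.cos y
      - 4*Complex.sin x*(Complex.cos y)^3) * Complex.sin_sq_add_cos_sq x

lemma refl_aux (z : ℂ) (h1 : Complex.Gamma z ≠ 0) (h2 : Complex.Gamma (1-z) ≠ 0) :
    Complex.sin (Real.pi*z) ≠ 0 ∧
      Complex.Gamma (1-z) = Real.pi / (Complex.sin (Real.pi*z) * Complex.Gamma z) := by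
  have hr := Complex.Gamma_mul_Gamma_one_sub z
  have hπ : (Real.pi : ℂ) ≠ 0 := Complex.ofReal_ne_zero.mpr Real.pi_ne_zero
  have hs : Complex.sin (Real.pi*z) ≠ 0 := by
    intro h
    rw [show ((Real.pi:ℂ)*z) = (↑Real.pi*z) by norm_num] at h
    rw [h, div_zero] at hr
    exact mul_ne_zero h1 h2 hr
  refine ⟨hs, ?_⟩
  field_simp at hr ⊢
  linear_combination hr

lemma half_aux (z : ℂ) (h1 : Complex.Gamma (z/2) ≠ 0) (h2 : Complex.Gamma ((1-z)/2) ≠ 0)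
    (h3 : Complex.Gamma z ≠ 0) :
    Complex.cos (Real.pi*z/2) ≠ 0 ∧
      Complex.Gamma ((1-z)/2) = Real.pi * Complex.Gamma (z/2) /
        (Complex.cos (Real.pi*z/2) * (Complex.Gamma z * (2:ℂ)^(1-z) * (Real.sqrt Real.pi : ℝ))) := by
  have hπ : (Real.pi : ℂ) ≠ 0 := Complex.ofReal_ne_zero.mpr Real.pi_ne_zero
  have hsqπ : ((Real.sqrt Real.pi : ℝ) : ℂ) ≠ 0 :=
    Complex.ofReal_ne_zero.mpr (ne_of_gt (Real.sqrt_pos.mpr Real.pi_pos))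
  have hpow : (2:ℂ)^(1-z) ≠ 0 := by simp [Complex.cpow_eq_zero_iff]
  have hdup := Complex.Gamma_mul_Gamma_add_half (z/2)
  rw [show (z/2 + 1/2 : ℂ) = (1+z)/2 by ring, show (2*(z/2) : ℂ) = z by ring] at hdup
  have hp2 : Complex.Gamma ((1+z)/2) ≠ 0 := by
    intro h
    rw [h, mul_zero] at hdup
    exact mul_ne_zero (mul_ne_zero h3 hpow) hsqπ hdup.symm
  have hr := Complex.Gamma_mul_Gamma_one_sub ((1-z)/2)
  rw [show (1 - (1-z)/2 : ℂ) = (1+z)/2 by ring,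
    show ((Real.pi : ℂ) * ((1-z)/2)) = Real.pi/2 - Real.pi*z/2 by ring,
    Complex.sin_pi_div_two_sub] at hr
  have hc : Complex.cos (Real.pi*z/2) ≠ 0 := by
    intro h
    rw [h, div_zero] at hr
    exact mul_ne_zero h2 hp2 hr
  refine ⟨hc, ?_⟩
  rw [eq_div_iff hc] at hr
  rw [eq_div_iff (mul_ne_zero hc (mul_ne_zero (mul_ne_zero h3 hpow) hsqπ))]
  linear_combination Complex.Gamma (z/2) * hr - Complex.Gamma ((1-z)/2) * Complex.cos (Real.pi*z/2) * hdup

lemma key (a b : ℂ)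
    (hA : Complex.Gamma a ≠ 0) (hB : Complex.Gamma b ≠ 0) (hC : Complex.Gamma (a+b) ≠ 0)
    (hA' : Complex.Gamma (1-a) ≠ 0) (hB' : Complex.Gamma (1-b) ≠ 0)
    (hC' : Complex.Gamma (1-(a+b)) ≠ 0)
    (hA2 : Complex.Gamma (a/2) ≠ 0) (hB2 : Complex.Gamma (b/2) ≠ 0)
    (hC2 : Complex.Gamma ((a+b)/2) ≠ 0)
    (hA2' : Complex.Gamma ((1-a)/2) ≠ 0) (hB2' : Complex.Gamma ((1-b)/2) ≠ 0)
    (hC2' : Complex.Gamma ((1-(a+b))/2) ≠ 0) :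
    Complex.Gamma (1-(a+b)) * Complex.Gamma b / Complex.Gamma (1-a)
      + Complex.Gamma (1-(a+b)) * Complex.Gamma a / Complex.Gamma (1-b)
      + Complex.Gamma a * Complex.Gamma b / Complex.Gamma (a+b)
    = ((Real.sqrt Real.pi : ℝ) : ℂ) *
        (Complex.Gamma ((1-(a+b))/2) / Complex.Gamma ((a+b)/2)) *
        (Complex.Gamma (a/2) * Complex.Gamma (b/2) /
          (Complex.Gamma ((1-a)/2) * Complex.Gamma ((1-b)/2))) := by
  have hπ : (Real.pi : ℂ) ≠ 0 := Complex.ofReal_ne_zero.mpr Real.pi_ne_zero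
  have hsqπ : ((Real.sqrt Real.pi : ℝ) : ℂ) ≠ 0 :=
    Complex.ofReal_ne_zero.mpr (ne_of_gt (Real.sqrt_pos.mpr Real.pi_pos))
  have hpa : (2:ℂ)^(1-a) ≠ 0 := by simp [Complex.cpow_eq_zero_iff]
  have hpb : (2:ℂ)^(1-b) ≠ 0 := by simp [Complex.cpow_eq_zero_iff]
  have hpc : (2:ℂ)^(1-(a+b)) ≠ 0 := by simp [Complex.cpow_eq_zero_iff]
  obtain ⟨hsa, ea⟩ := refl_aux a hA hA'
  obtain ⟨hsb, eb⟩ := refl_aux b hB hB'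
  obtain ⟨hsc, ec⟩ := refl_aux (a+b) hC hC'
  obtain ⟨hca, fa⟩ := half_aux a hA2 hA2' hA
  obtain ⟨hcb, fb⟩ := half_aux b hB2 hB2' hB
  obtain ⟨hcc, fc⟩ := half_aux (a+b) hC2 hC2' hC
  have T : (Complex.sin (Real.pi*a) + Complex.sin (Real.pi*b) + Complex.sin (Real.pi*(a+b)))
        * Complex.cos (Real.pi*(a+b)/2)
      = 2 * Complex.cos (Real.pi*a/2) * Complex.cos (Real.pi*b/2)
        * Complex.sin (Real.pi*(a+b)) := by
    have T0 := trig_aux ((Real.pi:ℂ)*a/2) ((Real.pi:ℂ)*b/2)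
    rw [show 2*((Real.pi:ℂ)*a/2)+2*((Real.pi:ℂ)*b/2) = (Real.pi:ℂ)*(a+b) by ring,
      show 2*((Real.pi:ℂ)*a/2) = (Real.pi:ℂ)*a by ring,
      show 2*((Real.pi:ℂ)*b/2) = (Real.pi:ℂ)*b by ring,
      show (Real.pi:ℂ)*a/2+(Real.pi:ℂ)*b/2 = (Real.pi:ℂ)*(a+b)/2 by ring] at T0
    exact T0
  have P : (2:ℂ)^(1-a) * (2:ℂ)^(1-b) = (2:ℂ)^(1-(a+b)) * 2 := by
    rw [← Complex.cpow_add _ _ two_ne_zero, show (1-a)+(1-b) = (1-(a+b))+1 by ring,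
      Complex.cpow_add _ _ two_ne_zero, Complex.cpow_one]
  have S : ((Real.sqrt Real.pi : ℝ) : ℂ) * ((Real.sqrt Real.pi : ℝ) : ℂ) = (Real.pi : ℂ) := by
    rw [← Complex.ofReal_mul, Real.mul_self_sqrt Real.pi_pos.le]
  have E1 : Complex.Gamma (1-(a+b)) * Complex.Gamma b / Complex.Gamma (1-a)
      + Complex.Gamma (1-(a+b)) * Complex.Gamma a / Complex.Gamma (1-b)
      + Complex.Gamma a * Complex.Gamma b / Complex.Gamma (a+b)
    = 2 * Complex.Gamma a * Complex.Gamma b * Complex.cos (Real.pi*a/2)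
        * Complex.cos (Real.pi*b/2)
      / (Complex.Gamma (a+b) * Complex.cos (Real.pi*(a+b)/2)) := by
    rw [ea, eb, ec]
    field_simp
    linear_combination T
  have E2 : ((Real.sqrt Real.pi : ℝ) : ℂ) *
        (Complex.Gamma ((1-(a+b))/2) / Complex.Gamma ((a+b)/2)) *
        (Complex.Gamma (a/2) * Complex.Gamma (b/2) /
          (Complex.Gamma ((1-a)/2) * Complex.Gamma ((1-b)/2)))
    = 2 * Complex.Gamma a * Complex.Gamma b * Complex.cos (Real.pi*a/2)
        * Complex.cos (Real.pi*b/2)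
      / (Complex.Gamma (a+b) * Complex.cos (Real.pi*(a+b)/2)) := by
    have fa' : Complex.Gamma ((1-a)/2) * (Complex.cos (Real.pi*a/2)
        * (Complex.Gamma a * (2:ℂ)^(1-a) * ((Real.sqrt Real.pi : ℝ) : ℂ)))
        = Real.pi * Complex.Gamma (a/2) := by
      rw [fa, div_mul_cancel₀]
      exact mul_ne_zero hca (mul_ne_zero (mul_ne_zero hA hpa) hsqπ)
    have fb' : Complex.Gamma ((1-b)/2) * (Complex.cos (Real.pi*b/2)
        * (Complex.Gamma b * (2:ℂ)^(1-b) * ((Real.sqrt Real.pi : ℝ) : ℂ)))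
        = Real.pi * Complex.Gamma (b/2) := by
      rw [fb, div_mul_cancel₀]
      exact mul_ne_zero hcb (mul_ne_zero (mul_ne_zero hB hpb) hsqπ)
    have fc' : Complex.Gamma ((1-(a+b))/2) * (Complex.cos (Real.pi*(a+b)/2)
        * (Complex.Gamma (a+b) * (2:ℂ)^(1-(a+b)) * ((Real.sqrt Real.pi : ℝ) : ℂ)))
        = Real.pi * Complex.Gamma ((a+b)/2) := by
      rw [fc, div_mul_cancel₀]
      exact mul_ne_zero hcc (mul_ne_zero (mul_ne_zero hC hpc) hsqπ)
    have hu : (2:ℂ)^(1-(a+b)) * ((Real.sqrt Real.pi : ℝ) : ℂ)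
        * ((Real.sqrt Real.pi : ℝ) : ℂ) ≠ 0 :=
      mul_ne_zero (mul_ne_zero hpc hsqπ) hsqπ
    have Gc : ((Real.sqrt Real.pi : ℝ) : ℂ) * Complex.Gamma ((1-(a+b))/2)
          * (Complex.Gamma (a/2) * Complex.Gamma (b/2))
          * (Complex.Gamma (a+b) * Complex.cos (Real.pi*(a+b)/2))
        = 2 * Complex.Gamma a * Complex.Gamma b * Complex.cos (Real.pi*a/2)
          * Complex.cos (Real.pi*b/2)
          * (Complex.Gamma ((a+b)/2)
            * (Complex.Gamma ((1-a)/2) * Complex.Gamma ((1-b)/2))) := by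
      apply mul_right_cancel₀ hu
      linear_combination (((Real.sqrt Real.pi : ℝ) : ℂ) * ((Real.sqrt Real.pi : ℝ) : ℂ)
          * Complex.Gamma (a/2) * Complex.Gamma (b/2)) * fc'
        + ((Real.pi : ℂ) * Complex.Gamma (a/2) * Complex.Gamma (b/2)
          * Complex.Gamma ((a+b)/2)) * S
        - (Complex.Gamma ((a+b)/2) * Complex.Gamma ((1-b)/2) * Complex.cos (Real.pi*b/2)
          * Complex.Gamma b * (2:ℂ)^(1-b) * ((Real.sqrt Real.pi : ℝ) : ℂ)) * fa'
        - ((Real.pi : ℂ) * Complex.Gamma (a/2) * Complex.Gamma ((a+b)/2)) * fb'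
        + (Complex.Gamma a * Complex.Gamma b * Complex.cos (Real.pi*a/2)
          * Complex.cos (Real.pi*b/2) * Complex.Gamma ((a+b)/2)
          * Complex.Gamma ((1-a)/2) * Complex.Gamma ((1-b)/2)
          * ((Real.sqrt Real.pi : ℝ) : ℂ) * ((Real.sqrt Real.pi : ℝ) : ℂ)) * P
    rw [show ((Real.sqrt Real.pi : ℝ) : ℂ) *
          (Complex.Gamma ((1-(a+b))/2) / Complex.Gamma ((a+b)/2)) *
          (Complex.Gamma (a/2) * Complex.Gamma (b/2) /
            (Complex.Gamma ((1-a)/2) * Complex.Gamma ((1-b)/2)))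
        = (((Real.sqrt Real.pi : ℝ) : ℂ) * Complex.Gamma ((1-(a+b))/2)
            * (Complex.Gamma (a/2) * Complex.Gamma (b/2)))
          / (Complex.Gamma ((a+b)/2) * (Complex.Gamma ((1-a)/2) * Complex.Gamma ((1-b)/2))) by ring,
      div_eq_div_iff (mul_ne_zero hC2 (mul_ne_zero hA2' hB2')) (mul_ne_zero hC hcc)]
    linear_combination Gc
  rw [E1, E2]


/-- The Gamma-function identity for
`H(s,u₁,u₂) = Γ(2s−u₁−u₂)Γ(1/2−s+u₂)/Γ(1/2+s−u₁) + Γ(2s−u₁−u₂)Γ(1/2−s+u₁)/Γ(1/2+s−u₂)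
  + Γ(1/2−s+u₁)Γ(1/2−s+u₂)/Γ(1−2s+u₁+u₂)`, valid when no Gamma argument is a
nonpositive integer. -/
theorem H_gamma_identity (s u₁ u₂ : ℂ)
    (hargs : ∀ z ∈ ([2*s - u₁ - u₂, 1/2 - s + u₂, 1/2 + s - u₁, 1/2 - s + u₁,
        1/2 + s - u₂, 1 - 2*s + u₁ + u₂, (2*s - u₁ - u₂)/2, (1 + u₁ + u₂ - 2*s)/2,
        (1/2 + u₁ - s)/2, (1/2 + u₂ - s)/2, (1/2 - u₁ + s)/2, (1/2 - u₂ + s)/2] : List ℂ),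
      ∀ n : ℕ, z ≠ -(n : ℂ)) :
    Complex.Gamma (2*s - u₁ - u₂) * Complex.Gamma (1/2 - s + u₂) / Complex.Gamma (1/2 + s - u₁)
      + Complex.Gamma (2*s - u₁ - u₂) * Complex.Gamma (1/2 - s + u₁)
          / Complex.Gamma (1/2 + s - u₂)
      + Complex.Gamma (1/2 - s + u₁) * Complex.Gamma (1/2 - s + u₂)
          / Complex.Gamma (1 - 2*s + u₁ + u₂)
    = (Real.pi : ℂ) ^ ((1 : ℂ)/2) *
        (Complex.Gamma ((2*s - u₁ - u₂)/2) / Complex.Gamma ((1 + u₁ + u₂ - 2*s)/2)) *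
        (Complex.Gamma ((1/2 + u₁ - s)/2) * Complex.Gamma ((1/2 + u₂ - s)/2)
          / (Complex.Gamma ((1/2 - u₁ + s)/2) * Complex.Gamma ((1/2 - u₂ + s)/2))) := by
  have gne : ∀ z w : ℂ, z = w → (∀ n : ℕ, w ≠ -(n:ℂ)) → Complex.Gamma z ≠ 0 := by
    intro z w hzw hw
    rw [hzw]
    exact Complex.Gamma_ne_zero hw
  have hA : Complex.Gamma (1/2 - s + u₁) ≠ 0 := gne _ _ rfl (hargs _ (by simp))
  have hB : Complex.Gamma (1/2 - s + u₂) ≠ 0 := gne _ _ rfl (hargs _ (by simp))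
  have hC : Complex.Gamma ((1/2 - s + u₁) + (1/2 - s + u₂)) ≠ 0 :=
    gne _ (1 - 2*s + u₁ + u₂) (by ring) (hargs _ (by simp))
  have hA' : Complex.Gamma (1 - (1/2 - s + u₁)) ≠ 0 :=
    gne _ (1/2 + s - u₁) (by ring) (hargs _ (by simp))
  have hB' : Complex.Gamma (1 - (1/2 - s + u₂)) ≠ 0 :=
    gne _ (1/2 + s - u₂) (by ring) (hargs _ (by simp))
  have hC' : Complex.Gamma (1 - ((1/2 - s + u₁) + (1/2 - s + u₂))) ≠ 0 :=
    gne _ (2*s - u₁ - u₂) (by ring) (hargs _ (by simp))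
  have hA2 : Complex.Gamma ((1/2 - s + u₁)/2) ≠ 0 :=
    gne _ ((1/2 + u₁ - s)/2) (by ring) (hargs _ (by simp))
  have hB2 : Complex.Gamma ((1/2 - s + u₂)/2) ≠ 0 :=
    gne _ ((1/2 + u₂ - s)/2) (by ring) (hargs _ (by simp))
  have hC2 : Complex.Gamma (((1/2 - s + u₁) + (1/2 - s + u₂))/2) ≠ 0 :=
    gne _ ((1 + u₁ + u₂ - 2*s)/2) (by ring) (hargs _ (by simp))
  have hA2' : Complex.Gamma ((1 - (1/2 - s + u₁))/2) ≠ 0 :=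
    gne _ ((1/2 - u₁ + s)/2) (by ring) (hargs _ (by simp))
  have hB2' : Complex.Gamma ((1 - (1/2 - s + u₂))/2) ≠ 0 :=
    gne _ ((1/2 - u₂ + s)/2) (by ring) (hargs _ (by simp))
  have hC2' : Complex.Gamma ((1 - ((1/2 - s + u₁) + (1/2 - s + u₂)))/2) ≠ 0 :=
    gne _ ((2*s - u₁ - u₂)/2) (by ring) (hargs _ (by simp))
  have K := key (1/2 - s + u₁) (1/2 - s + u₂) hA hB hC hA' hB' hC' hA2 hB2 hC2 hA2' hB2' hC2'
  rw [show (1 - ((1/2 - s + u₁) + (1/2 - s + u₂)) : ℂ) = 2*s - u₁ - u₂ by ring,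
    show (1 - (1/2 - s + u₁) : ℂ) = 1/2 + s - u₁ by ring,
    show ((1/2 + s - u₁)/2 : ℂ) = (1/2 - u₁ + s)/2 by ring,
    show (1 - (1/2 - s + u₂) : ℂ) = 1/2 + s - u₂ by ring,
    show ((1/2 + s - u₂)/2 : ℂ) = (1/2 - u₂ + s)/2 by ring,
    show ((1/2 - s + u₁)/2 : ℂ) = (1/2 + u₁ - s)/2 by ring,
    show ((1/2 - s + u₂)/2 : ℂ) = (1/2 + u₂ - s)/2 by ring,
    show ((1/2 - s + u₁) + (1/2 - s + u₂) : ℂ) = 1 - 2*s + u₁ + u₂ by ring,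
    show ((1 - 2*s + u₁ + u₂)/2 : ℂ) = (1 + u₁ + u₂ - 2*s)/2 by ring,
    show ((Real.sqrt Real.pi : ℝ) : ℂ) = (Real.pi : ℂ) ^ ((1 : ℂ)/2) by
      rw [Real.sqrt_eq_rpow, Complex.ofReal_cpow Real.pi_pos.le]
      norm_num] at K
  exact K
end
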